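/- Assume δ > 0, β₀ > 0 and β₁ < −δ/(β₀(1 − 2h(x₀))). Let (ω_c, τ_c) be the unique positive solution of sin(ωτ)/(ωτ) = (δ + β₀β₁)/(2β₀β₁) and (cos(ωτ) − 1)/(ωτ)² = 1/(2β₀β₁τ), with ω_cτ_c ∈ (0, π). Then Re(Δ_λ(iω_c, τ_c)) > 0 and Im(Δ_λ(iω_c, τ_c)) > 0; in particular, Δ_λ(iω_c, τ_c) ≠ 0, so ±iω_c are simple zeros of Δ(·, τ_c). -/

import Mathlib

/-- The partial derivative in `λ` of the characteristic function:
`Δ_λ(λ,τ) = 1 − (2β₀β₁/τ)∫_{−τ}^{0} s e^{λ s} ds`. -/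
noncomputable def charFnD (β₀ β₁ τ : ℝ) (lam : ℂ) : ℂ :=
  1 - ((2 * β₀ * β₁ / τ : ℝ) : ℂ) * ∫ s in (-τ)..(0 : ℝ), (s : ℂ) * Complex.exp (lam * (s : ℂ))

/-- `h(x) = sin(x)/x`. -/
noncomputable def hfun (x : ℝ) : ℝ := Real.sin x / x

/-- `x₀`, the smallest `x > 0` with `x = tan x` and `h(x) > 0` (numerically `x₀ ≈ 7.725`). -/
noncomputable def xZero : ℝ := sInf {x : ℝ | 0 < x ∧ x = Real.tan x ∧ 0 < hfun x}

/-- The system: `sin(ωτ)/(ωτ) = (δ+β₀β₁)/(2β₀β₁)` and `(cos(ωτ) − 1)/(ωτ)² = 1/(2β₀β₁τ)`. -/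
def sys (δ β₀ β₁ ω τ : ℝ) : Prop :=
  Real.sin (ω * τ) / (ω * τ) = (δ + β₀ * β₁) / (2 * β₀ * β₁) ∧
  (Real.cos (ω * τ) - 1) / (ω * τ) ^ 2 = 1 / (2 * β₀ * β₁ * τ)

/-!
With `x = ωτ`, the integral in `Δ_λ(iω, τ)` has the closed form
`((1 - cos x - x sin x) + i (sin x - x cos x)) / ω²`, and the second equation of the system
turns the prefactor `2β₀β₁/(τω²)` into `1/(cos x - 1)`. Hence
`Re Δ_λ = (2(1 - cos x) - x sin x)/(1 - cos x)` and `Im Δ_λ = (sin x - x cos x)/(1 - cos x)`,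
both positive for `x ∈ (0, π)` by `x cos x < sin x` (used at `x` and, via half angles, at `x/2`).
Since `Δ_λ(conj λ, τ) = conj Δ_λ(λ, τ)`, the value at `-iω_c` does not vanish either.
-/

open Real

theorem mul_cos_lt_sin {x : ℝ} (h0 : 0 < x) (hπ : x < π) : x * cos x < sin x := by
  rcases lt_or_ge x (π / 2) with h | h
  · have hc : 0 < cos x := cos_pos_of_mem_Ioo ⟨by linarith, h⟩
    have ht : x < tan x := lt_tan h0 h
    rwa [tan_eq_sin_div_cos, lt_div_iff₀ hc] at ht
  · have hc : cos x ≤ 0 := cos_nonpos_of_pi_div_two_le_of_le h (by linarith [pi_pos])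
    nlinarith [sin_pos_of_pos_of_lt_pi h0 hπ]

theorem mul_sin_lt_two_mul_one_sub_cos {x : ℝ} (h0 : 0 < x) (hπ : x < π) :
    x * sin x < 2 * (1 - cos x) := by
  have hs : 0 < sin (x / 2) := sin_pos_of_pos_of_lt_pi (by linarith) (by linarith)
  have hhalf := mul_cos_lt_sin (x := x / 2) (by linarith) (by linarith)
  have hx : x = 2 * (x / 2) := by ring
  rw [hx, sin_two_mul, cos_two_mul_eq_one_sub]
  nlinarith [mul_lt_mul_of_pos_left hhalf hs]

theorem integral_ofReal_mul_cexp_mul {a : ℂ} (ha : a ≠ 0) (u v : ℝ) :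
    ∫ s in u..v, (s : ℂ) * Complex.exp (a * s) =
      (v / a - 1 / a ^ 2) * Complex.exp (a * v) - (u / a - 1 / a ^ 2) * Complex.exp (a * u) := by
  have hderiv (s : ℝ) : HasDerivAt (fun t : ℝ => ((t : ℂ) / a - 1 / a ^ 2) * Complex.exp (a * t))
      ((s : ℂ) * Complex.exp (a * s)) s := by
    have hlin : HasDerivAt (fun z : ℂ => z / a - 1 / a ^ 2) (1 / a) s :=
      ((hasDerivAt_id _).div_const a).sub_const _
    have hexp : HasDerivAt (fun z : ℂ => Complex.exp (a * z)) (Complex.exp (a * s) * a) s := by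
      simpa using ((hasDerivAt_id (s : ℂ)).const_mul a).cexp
    refine (hlin.mul hexp).comp_ofReal.congr_deriv ?_
    field_simp
    ring
  exact intervalIntegral.integral_eq_sub_of_hasDerivAt (fun s _ => hderiv s)
    (Continuous.intervalIntegrable (by fun_prop) _ _)

theorem charFnD_conj (β₀ β₁ τ : ℝ) (lam : ℂ) :
    charFnD β₀ β₁ τ ((starRingEnd ℂ) lam) = (starRingEnd ℂ) (charFnD β₀ β₁ τ lam) := by
  simp only [charFnD, map_sub, map_one, map_mul, Complex.conj_ofReal,
    ← intervalIntegral.intervalIntegral_conj, ← Complex.exp_conj]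

theorem charFnD_I_mul (β₀ β₁ τ : ℝ) {ω : ℝ} (hω : ω ≠ 0) :
    charFnD β₀ β₁ τ (Complex.I * ω) = 1 - ((2 * β₀ * β₁ / (τ * ω ^ 2) : ℝ) : ℂ) *
      ((1 - cos (ω * τ) - ω * τ * sin (ω * τ) : ℝ) +
        (sin (ω * τ) - ω * τ * cos (ω * τ) : ℝ) * Complex.I) := by
  have hω' : (ω : ℂ) ≠ 0 := by exact_mod_cast hω
  have hexp : Complex.exp (Complex.I * ω * ((-τ : ℝ) : ℂ)) =
      cos (ω * τ) - sin (ω * τ) * Complex.I := by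
    rw [show Complex.I * ω * ((-τ : ℝ) : ℂ) = ((-(ω * τ) : ℝ) : ℂ) * Complex.I by push_cast; ring,
      Complex.exp_mul_I]
    push_cast
    rw [Complex.cos_neg, Complex.sin_neg]
    ring
  rw [charFnD, integral_ofReal_mul_cexp_mul (mul_ne_zero Complex.I_ne_zero hω'), hexp]
  push_cast
  simp only [mul_zero, Complex.exp_zero, mul_one, zero_div]
  field_simp
  ring_nf
  simp only [Complex.I_sq, Complex.I_pow_three]
  ring

namespace sys

variable {δ β₀ β₁ ω τ : ℝ}

theorem two_mul_mul_div_eq_one_div_cos_sub_one (hsys : sys δ β₀ β₁ ω τ) (hx : ω * τ ≠ 0) :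
    2 * β₀ * β₁ / (τ * ω ^ 2) = 1 / (cos (ω * τ) - 1) := by
  have hτ : τ ≠ 0 := right_ne_zero_of_mul hx
  have h : 2 * β₀ * β₁ * τ = (ω * τ) ^ 2 / (cos (ω * τ) - 1) := by
    simpa using congrArg (·⁻¹) hsys.2.symm
  calc 2 * β₀ * β₁ / (τ * ω ^ 2) = 2 * β₀ * β₁ * τ / (ω * τ) ^ 2 := by field_simp
    _ = 1 / (cos (ω * τ) - 1) := by rw [h, div_div_cancel_left' (pow_ne_zero 2 hx), one_div]

theorem charFnD_I_mul (hsys : sys δ β₀ β₁ ω τ) (hx : ω * τ ≠ 0) (hc : cos (ω * τ) ≠ 1) :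
    charFnD β₀ β₁ τ (Complex.I * ω) =
      ((2 * (1 - cos (ω * τ)) - ω * τ * sin (ω * τ)) / (1 - cos (ω * τ)) : ℝ) +
        ((sin (ω * τ) - ω * τ * cos (ω * τ)) / (1 - cos (ω * τ)) : ℝ) * Complex.I := by
  rw [_root_.charFnD_I_mul β₀ β₁ τ (left_ne_zero_of_mul hx),
    hsys.two_mul_mul_div_eq_one_div_cos_sub_one hx]
  generalize cos (ω * τ) = c at hc ⊢
  have hc₁ : (c : ℂ) - 1 ≠ 0 := by exact_mod_cast sub_ne_zero.mpr hc
  have hc₂ : 1 - (c : ℂ) ≠ 0 := by rwa [← neg_sub, neg_ne_zero]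
  push_cast
  field_simp
  ring

end sys

theorem charFnD_re_im_pos_general
    (δ β₀ β₁ ω_c τ_c : ℝ)
    (hx_c : ω_c * τ_c ∈ Set.Ioo 0 Real.pi)
    (hsys : sys δ β₀ β₁ ω_c τ_c) :
    0 < (charFnD β₀ β₁ τ_c (Complex.I * (ω_c : ℂ))).re ∧
    0 < (charFnD β₀ β₁ τ_c (Complex.I * (ω_c : ℂ))).im ∧
    charFnD β₀ β₁ τ_c (Complex.I * (ω_c : ℂ)) ≠ 0 ∧
    charFnD β₀ β₁ τ_c (-(Complex.I * (ω_c : ℂ))) ≠ 0 := by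
  obtain ⟨hx0, hxπ⟩ := hx_c
  have hcos : cos (ω_c * τ_c) < 1 := by
    simpa using cos_lt_cos_of_nonneg_of_le_pi le_rfl hxπ.le hx0
  have hval := hsys.charFnD_I_mul hx0.ne' hcos.ne
  have hre : 0 < (charFnD β₀ β₁ τ_c (Complex.I * ω_c)).re := by
    rw [hval, Complex.add_re, Complex.ofReal_re, Complex.mul_I_re, Complex.ofReal_im, neg_zero,
      add_zero]
    exact div_pos (by linarith [mul_sin_lt_two_mul_one_sub_cos hx0 hxπ]) (sub_pos.mpr hcos)
  have him : 0 < (charFnD β₀ β₁ τ_c (Complex.I * ω_c)).im := by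
    rw [hval, Complex.add_im, Complex.ofReal_im, Complex.mul_I_im, Complex.ofReal_re, zero_add]
    exact div_pos (sub_pos.mpr (mul_cos_lt_sin hx0 hxπ)) (sub_pos.mpr hcos)
  have hne : charFnD β₀ β₁ τ_c (Complex.I * ω_c) ≠ 0 := Complex.ne_zero_of_re_pos hre
  have hconj : -(Complex.I * ω_c) = (starRingEnd ℂ) (Complex.I * ω_c) := by simp
  refine ⟨hre, him, hne, ?_⟩
  rw [hconj, charFnD_conj]
  exact (map_ne_zero _).mpr hne

/-- Lemma 2 of the paper: at the critical pair `(ω_c, τ_c)`, with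
`ω_c τ_c ∈ (0, π)`, both the real and the imaginary part of `Δ_λ(iω_c, τ_c)` are
positive; in particular `Δ_λ(± iω_c, τ_c) ≠ 0`, so `± iω_c` are simple zeros of
`Δ(·, τ_c)`. -/
theorem charFnD_re_im_pos
    (δ β₀ β₁ ω_c τ_c : ℝ) (hδ : 0 < δ) (hβ₀ : 0 < β₀)
    (hβ₁ : β₁ < -δ / (β₀ * (1 - 2 * hfun xZero)))
    (hω_c : 0 < ω_c) (hτ_c : 0 < τ_c)
    (hx_c : ω_c * τ_c ∈ Set.Ioo 0 Real.pi)
    (hsys : sys δ β₀ β₁ ω_c τ_c) :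
    0 < (charFnD β₀ β₁ τ_c (Complex.I * (ω_c : ℂ))).re ∧
    0 < (charFnD β₀ β₁ τ_c (Complex.I * (ω_c : ℂ))).im ∧
    charFnD β₀ β₁ τ_c (Complex.I * (ω_c : ℂ)) ≠ 0 ∧
    charFnD β₀ β₁ τ_c (-(Complex.I * (ω_c : ℂ))) ≠ 0 :=
  charFnD_re_im_pos_general δ β₀ β₁ ω_c τ_c hx_c hsys
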